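/- arXiv:2309.04398 — 3 statements merged into one kernel-verified Lean document; each statement's English description precedes it below -/
import Mathlib

section
/- As formal power series, (−q;q)_∞ · Σ_{m≥0} q^{m(m+1)/2} = (−q;q)_∞^3 · (q;q)_∞, i.e., Σ_{m≥0} q^{m(m+1)/2} = (q^2;q^2)_∞ / (q;q^2)_∞. -/
/-!
Rothe's `q`-binomial theorem `∏_{j<n} (y + q^j) = ∑_k [n k]_q q^(k choose 2) y^(n-k)`, taken at
`n = 2N`, `y = q^N`, becomes after cancelling a power of `q` the finite Jacobi triple product at
`z = 1`: `(-q;q)_N (-1;q)_N = ∑_{k ≤ 2N} [2N k]_q q^((k-N) choose 2)`. After multiplying by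
`(q;q)_{2N}`, each `[2N k]_q (q;q)_{2N}` agrees with `1` up to order `min (k, 2N - k)`, so up to
order `N` the right-hand side is `∑_k q^((k-N) choose 2) = 2 ∑_{m<N} q^(m(m+1)/2) + q^(N(N+1)/2)`.
Letting `N → ∞` gives `2 (-q;q)_∞^2 (q;q)_∞ = 2 ∑_m q^(m(m+1)/2)`. The quotient form follows from
`(q;q)_∞ = (q;q²)_∞ (q²;q²)_∞` and `(-q;q)_∞ (q;q)_∞ = (q²;q²)_∞`.
-/

noncomputable instance : TopologicalSpace (PowerSeries ℤ) :=
  inferInstanceAs (TopologicalSpace ((Unit →₀ ℕ) → ℤ))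
noncomputable instance : TopologicalSpace (PowerSeries ℚ) :=
  inferInstanceAs (TopologicalSpace ((Unit →₀ ℕ) → ℚ))

open PowerSeries
open Finset Filter Topology

lemma Nat.choose_two_succ (k : ℕ) : (k + 1).choose 2 = k.choose 2 + k := by
  rw [Nat.choose_succ_succ', Nat.choose_one_right, add_comm]

section QBinomial

variable {A : Type*} [Semiring A] (q : A)

def qBinom : ℕ → ℕ → A
  | _, 0 => 1
  | 0, _ + 1 => 0
  | n + 1, k + 1 => qBinom n (k + 1) + q ^ (n - k) * qBinom n k

@[simp] lemma qBinom_zero_right (n : ℕ) : qBinom q n 0 = 1 := by cases n <;> rfl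

lemma qBinom_succ_succ (n k : ℕ) :
    qBinom q (n + 1) (k + 1) = qBinom q n (k + 1) + q ^ (n - k) * qBinom q n k := rfl

lemma qBinom_eq_zero_of_lt : ∀ {n k : ℕ}, n < k → qBinom q n k = 0
  | 0, _ + 1, _ => rfl
  | n + 1, k + 1, h => by
    rw [qBinom_succ_succ, qBinom_eq_zero_of_lt (by omega), qBinom_eq_zero_of_lt (by omega),
      mul_zero, add_zero]

end QBinomial

section Rothe

variable {A : Type*} [CommSemiring A] (q : A)

/-- Rothe's q-binomial theorem, in homogeneous form. -/
theorem prod_add_pow_eq_sum_qBinom (y : A) (n : ℕ) :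
    ∏ j ∈ range n, (y + q ^ j) =
      ∑ k ∈ range (n + 1), qBinom q n k * q ^ k.choose 2 * y ^ (n - k) := by
  induction n with
  | zero => simp
  | succ n ih =>
    have hy : (∑ k ∈ range (n + 1), qBinom q n k * q ^ k.choose 2 * y ^ (n - k)) * y =
        ∑ k ∈ range (n + 1), qBinom q n (k + 1) * q ^ (k + 1).choose 2 * y ^ (n - k)
          + y ^ (n + 1) := by
      have e := (sum_range_succ' (fun k => qBinom q n k * q ^ k.choose 2 * y ^ (n + 1 - k))
        (n + 1)).symm.trans (sum_range_succ _ (n + 1))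
      simp only [qBinom_eq_zero_of_lt q (Nat.lt_succ_self n), qBinom_zero_right,
        Nat.add_sub_add_right, Nat.choose_zero_succ, pow_zero, zero_mul, add_zero, one_mul,
        Nat.sub_zero] at e
      rw [e, sum_mul]
      refine sum_congr rfl fun k hk => ?_
      rw [mul_assoc, ← pow_succ, Nat.sub_add_comm (Nat.lt_succ_iff.1 (mem_range.1 hk))]
    have hq : (∑ k ∈ range (n + 1), qBinom q n k * q ^ k.choose 2 * y ^ (n - k)) * q ^ n =
        ∑ k ∈ range (n + 1),
          q ^ (n - k) * qBinom q n k * q ^ (k + 1).choose 2 * y ^ (n - k) := by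
      rw [sum_mul]
      refine sum_congr rfl fun k hk => ?_
      have hk := Nat.lt_succ_iff.1 (mem_range.1 hk)
      calc _ = qBinom q n k * q ^ (k.choose 2 + n) * y ^ (n - k) := by ring
        _ = qBinom q n k * q ^ (n - k + (k + 1).choose 2) * y ^ (n - k) := by
          rw [Nat.choose_two_succ, show n - k + (k.choose 2 + k) = k.choose 2 + n by omega]
        _ = _ := by ring
    rw [prod_range_succ, ih, mul_add, hy, hq, sum_range_succ' _ (n + 1)]
    simp only [qBinom_succ_succ, qBinom_zero_right, add_mul, sum_add_distrib, Nat.reduceSubDiff,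
      Nat.choose_zero_succ, pow_zero, mul_one, tsub_zero, one_mul]
    ring

lemma prod_pow_add_pow_eq (N : ℕ) :
    ∏ j ∈ range (2 * N), (q ^ N + q ^ j) = q ^ (N.choose 2 + N * N) *
      ((∏ i ∈ range N, (1 + q ^ (i + 1))) * ∏ i ∈ range N, (1 + q ^ i)) := by
  have hlow : ∏ j ∈ range N, (q ^ N + q ^ j) =
      q ^ N.choose 2 * ∏ i ∈ range N, (1 + q ^ (i + 1)) := by
    rw [← prod_range_reflect (fun i => 1 + q ^ (i + 1)), Nat.choose_two_right, ← sum_range_id,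
      ← prod_pow_eq_pow_sum, ← prod_mul_distrib]
    refine prod_congr rfl fun j hj => ?_
    rw [mul_add, mul_one, ← pow_add,
      show j + (N - 1 - j + 1) = N by have := mem_range.1 hj; omega, add_comm]
  have hhigh : ∏ i ∈ range N, (q ^ N + q ^ (N + i)) =
      q ^ (N * N) * ∏ i ∈ range N, (1 + q ^ i) := by
    have h := pow_card_mul_prod (s := range N) (b := q ^ N) (f := fun i => 1 + q ^ i)
    rw [card_range] at h
    rw [pow_mul, h]
    exact prod_congr rfl fun i _ => by rw [pow_add, mul_add, mul_one]
  rw [two_mul, prod_range_add, hlow, hhigh, pow_add]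
  ring

end Rothe

section QPochhammer
variable {A : Type*} [CommRing A] (q : A)

/-- `(q;q)_n` -/
def qPochhammer (n : ℕ) : A := ∏ i ∈ range n, (1 - q ^ (i + 1))

lemma qPochhammer_succ (n : ℕ) : qPochhammer q (n + 1) = qPochhammer q n * (1 - q ^ (n + 1)) :=
  prod_range_succ _ n

theorem qBinom_mul_qPochhammer_mul_qPochhammer {n k : ℕ} (hk : k ≤ n) :
    qBinom q n k * qPochhammer q k * qPochhammer q (n - k) = qPochhammer q n := by
  induction n generalizing k with
  | zero => simp [Nat.le_zero.1 hk, qPochhammer]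
  | succ n ih =>
    rcases k with _ | k
    · simp [qPochhammer]
    have hk : k ≤ n := by omega
    have h₁ : qBinom q n (k + 1) * qPochhammer q (k + 1) * qPochhammer q (n - k) =
        qPochhammer q n * (1 - q ^ (n - k)) := by
      rcases hk.lt_or_eq with hlt | rfl
      · obtain ⟨m, hm⟩ : ∃ m, n - k = m + 1 := ⟨n - k - 1, by omega⟩
        rw [hm, qPochhammer_succ q m, ← ih (show k + 1 ≤ n by omega),
          show n - (k + 1) = m by omega]
        ring
      · simp [qBinom_eq_zero_of_lt q (Nat.lt_succ_self k)]
    have h₂ : q ^ (n - k) * q ^ (k + 1) = q ^ (n + 1) := by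
      rw [← pow_add]; congr 1; omega
    rw [qPochhammer_succ _ k] at h₁
    rw [qBinom_succ_succ, Nat.add_sub_add_right, qPochhammer_succ _ k, qPochhammer_succ _ n]
    linear_combination h₁ + q ^ (n - k) * (1 - q ^ (k + 1)) * ih hk - qPochhammer q n * h₂
end QPochhammer

section
variable {R : Type*} [CommRing R]

theorem prod_one_add_X_pow_mul_prod_one_add_X_pow_eq_sum (N : ℕ) :
    (∏ i ∈ range N, (1 + (X : R⟦X⟧) ^ (i + 1))) * ∏ i ∈ range N, (1 + (X : R⟦X⟧) ^ i) =
      ∑ i ∈ range N, qBinom X (2 * N) (N - 1 - i) * X ^ (i + 2).choose 2 +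
        ∑ i ∈ range (N + 1), qBinom X (2 * N) (N + i) * X ^ i.choose 2 := by
  apply X_pow_mul_cancel (k := N.choose 2 + N * N)
  rw [← prod_pow_add_pow_eq, prod_add_pow_eq_sum_qBinom, show 2 * N + 1 = N + (N + 1) by omega,
    sum_range_add, ← sum_range_reflect, mul_add, mul_sum, mul_sum]
  congr 1 <;> refine sum_congr rfl fun i hi => ?_ <;> have hi := mem_range.1 hi
  · have he : (N - 1 - i).choose 2 + N * (2 * N - (N - 1 - i)) =
        N.choose 2 + N * N + (i + 2).choose 2 := by
      obtain ⟨a, rfl⟩ := Nat.exists_eq_add_of_lt hi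
      rw [show i + a + 1 - 1 - i = a by omega,
        show 2 * (i + a + 1) - a = a + 2 * i + 2 by omega]
      qify
      simp only [Nat.cast_choose_two]
      push_cast
      ring
    rw [← pow_mul, mul_assoc, ← pow_add, he, pow_add]
    ring
  · have he : (N + i).choose 2 + N * (2 * N - (N + i)) = N.choose 2 + N * N + i.choose 2 := by
      obtain ⟨a, rfl⟩ := Nat.exists_eq_add_of_le (Nat.lt_succ_iff.1 hi)
      rw [show 2 * (i + a) - (i + a + i) = a by omega]
      qify
      simp only [Nat.cast_choose_two]
      push_cast
      ring
    rw [← pow_mul, mul_assoc, ← pow_add, he, pow_add]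
    ring

lemma Ideal.Quotient.mk_qPochhammer_X_of_le {m j : ℕ} (h : m ≤ j) :
    Ideal.Quotient.mk (Ideal.span {(X : R⟦X⟧) ^ (m + 1)}) (qPochhammer X j) =
      Ideal.Quotient.mk (Ideal.span {(X : R⟦X⟧) ^ (m + 1)}) (qPochhammer X m) := by
  have htail : Ideal.Quotient.mk (Ideal.span {(X : R⟦X⟧) ^ (m + 1)})
      (∏ i ∈ Ico m j, (1 - X ^ (i + 1))) = 1 := by
    refine (map_prod _ _ _).trans (prod_eq_one fun i hi => ?_)
    rw [map_sub, map_one, Ideal.Quotient.eq_zero_iff_mem.2, sub_zero]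
    exact Ideal.mem_span_singleton.2 (pow_dvd_pow X (by have := (mem_Ico.1 hi).1; omega))
  rw [qPochhammer, qPochhammer, ← prod_range_mul_prod_Ico _ h, map_mul, htail, mul_one]

theorem X_pow_dvd_qBinom_mul_qPochhammer_sub_one {n k m : ℕ} (hk : k ≤ n) (hmk : m ≤ k)
    (hmn : m ≤ n - k) : (X : R⟦X⟧) ^ (m + 1) ∣ qBinom X n k * qPochhammer X n - 1 := by
  set π := Ideal.Quotient.mk (Ideal.span {(X : R⟦X⟧) ^ (m + 1)})
  have hu : IsUnit (π (qPochhammer X m)) := by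
    refine IsUnit.map π (isUnit_iff_constantCoeff.2 ?_)
    simp [qPochhammer, map_prod]
  have h := congrArg π (qBinom_mul_qPochhammer_mul_qPochhammer X hk)
  rw [map_mul, map_mul, Ideal.Quotient.mk_qPochhammer_X_of_le hmk,
    Ideal.Quotient.mk_qPochhammer_X_of_le hmn,
    Ideal.Quotient.mk_qPochhammer_X_of_le (hmk.trans hk)] at h
  replace h := hu.mul_left_inj.1 (h.trans (one_mul _).symm)
  rw [← Ideal.mem_span_singleton, ← Ideal.Quotient.eq_zero_iff_mem, map_sub, map_mul, map_one,
    Ideal.Quotient.mk_qPochhammer_X_of_le (hmk.trans hk), h, sub_self]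

theorem X_pow_dvd_prod_mul_qPochhammer_sub_sum (N : ℕ) :
    (X : R⟦X⟧) ^ N ∣
      (∏ i ∈ range N, (1 + X ^ (i + 1))) * (∏ i ∈ range N, (1 + X ^ i)) *
          qPochhammer X (2 * N) -
        (∑ i ∈ range N, X ^ (i + 2).choose 2 + ∑ i ∈ range (N + 1), X ^ i.choose 2) := by
  rw [prod_one_add_X_pow_mul_prod_one_add_X_pow_eq_sum, add_mul, sum_mul, sum_mul,
    add_sub_add_comm, ← sum_sub_distrib, ← sum_sub_distrib]
  refine dvd_add (dvd_sum fun i hi => ?_) (dvd_sum fun i hi => ?_) <;> have hi := mem_range.1 hi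
  · have h := mul_dvd_mul (X_pow_dvd_qBinom_mul_qPochhammer_sub_one (R := R) (n := 2 * N)
      (k := N - 1 - i) (m := N - 1 - i) (by omega) le_rfl (by omega))
      (dvd_refl (X ^ (i + 2).choose 2))
    rw [← pow_add] at h
    have hle : N ≤ N - 1 - i + 1 + (i + 2).choose 2 := by
      rw [Nat.choose_two_succ, Nat.choose_two_succ]; omega
    convert (pow_dvd_pow X hle).trans h using 1
    ring
  · have h := mul_dvd_mul (X_pow_dvd_qBinom_mul_qPochhammer_sub_one (R := R) (n := 2 * N)
      (k := N + i) (m := N - i) (by omega) (by omega) (by omega)) (dvd_refl (X ^ i.choose 2))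
    rw [← pow_add] at h
    have hle : N ≤ N - i + 1 + i.choose 2 := by
      rcases i with _ | i
      · omega
      · rw [Nat.choose_two_succ]; omega
    convert (pow_dvd_pow X hle).trans h using 1
    ring

end

section PiTopology

variable {R : Type*} [Semiring R]

lemma tendsto_order_X_pow_comp {e : ℕ → ℕ} (he : Tendsto e atTop atTop) :
    Tendsto (fun n => ((X : R⟦X⟧) ^ e n).order) atTop (𝓝 ⊤) := by
  nontriviality R using Subsingleton.eq_zero (α := R⟦X⟧)
  simp_rw [order_X_pow]
  exact ENat.tendsto_natCast_nhds_top.comp he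

instance [IsAddTorsionFree R] : IsAddTorsionFree R⟦X⟧ :=
  inferInstanceAs (IsAddTorsionFree ((Unit →₀ ℕ) → R))

variable [TopologicalSpace R]
open PowerSeries.WithPiTopology

theorem tendsto_zero_of_X_pow_dvd {f : ℕ → R⟦X⟧} (h : ∀ N, X ^ N ∣ f N) :
    Tendsto f atTop (𝓝 0) := by
  rw [tendsto_iff_coeff_tendsto]
  intro d
  rw [map_zero]
  exact tendsto_atTop_of_eventually_const (i₀ := d + 1) fun N hN =>
    X_pow_dvd_iff.1 (h N) d (by omega)

lemma summable_X_pow_comp {e : ℕ → ℕ} (he : Tendsto e atTop atTop) :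
    Summable fun n => (X : R⟦X⟧) ^ e n :=
  summable_of_tendsto_order_atTop_nhds_top R (tendsto_order_X_pow_comp he)

end PiTopology

section
variable {R : Type*} [CommRing R] [TopologicalSpace R]
open PowerSeries.WithPiTopology

lemma multipliable_one_add_X_pow_comp {e : ℕ → ℕ} (he : Tendsto e atTop atTop) :
    Multipliable fun n => 1 + (X : R⟦X⟧) ^ e n :=
  multipliable_one_add_of_tendsto_order_atTop_nhds_top R (tendsto_order_X_pow_comp he)

lemma multipliable_one_sub_X_pow_comp {e : ℕ → ℕ} (he : Tendsto e atTop atTop) :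
    Multipliable fun n => 1 - (X : R⟦X⟧) ^ e n := by
  simpa [sub_eq_add_neg] using multipliable_one_add_of_tendsto_order_atTop_nhds_top R
    (by simpa [order_neg] using tendsto_order_X_pow_comp (R := R) he)

variable (R) [IsTopologicalRing R] [T2Space R]

theorem tsum_X_pow_triangle_eq_sq_mul [IsAddTorsionFree R] :
    ∑' m : ℕ, (X : R⟦X⟧) ^ (m * (m + 1) / 2) =
      (∏' n : ℕ, (1 + (X : R⟦X⟧) ^ (n + 1))) ^ 2 * ∏' n : ℕ, (1 - (X : R⟦X⟧) ^ (n + 1)) := by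
  set A := ∏' n : ℕ, (1 + (X : R⟦X⟧) ^ (n + 1))
  set B := ∏' n : ℕ, (1 - (X : R⟦X⟧) ^ (n + 1))
  set S := ∑' m : ℕ, (X : R⟦X⟧) ^ (m * (m + 1) / 2)
  have hA : HasProd (fun n => 1 + (X : R⟦X⟧) ^ (n + 1)) A :=
    (multipliable_one_add_X_pow_comp (tendsto_add_atTop_nat 1)).hasProd
  have hB : HasProd (fun n => 1 - (X : R⟦X⟧) ^ (n + 1)) B :=
    (multipliable_one_sub_X_pow R).hasProd
  have hS : HasSum (fun m => (X : R⟦X⟧) ^ (m + 1).choose 2) S := by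
    have htri (m : ℕ) : m * (m + 1) / 2 = (m + 1).choose 2 := by
      rw [Nat.choose_two_right, Nat.add_sub_cancel, mul_comm]
    simp only [S, htri]
    refine (summable_X_pow_comp (tendsto_atTop_mono (fun m => ?_) tendsto_id)).hasSum
    rw [id, Nat.choose_two_succ]
    omega
  have hprod : Tendsto (fun N => (∏ i ∈ range N, (1 + (X : R⟦X⟧) ^ (i + 1))) *
      (∏ i ∈ range N, (1 + X ^ i)) * qPochhammer X (2 * N)) atTop (𝓝 (A * (2 * A) * B)) := by
    refine (hA.tendsto_prod_nat.mul ?_).mul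
      (hB.tendsto_prod_nat.comp (tendsto_id.const_mul_atTop' two_pos))
    simpa [one_add_one_eq_two] using (hA.zero_mul (f := fun n => 1 + X ^ n)).tendsto_prod_nat
  have hsum : Tendsto (fun N => ∑ i ∈ range N, (X : R⟦X⟧) ^ (i + 2).choose 2 +
      ∑ i ∈ range (N + 1), X ^ i.choose 2) atTop (𝓝 ((S - 1) + (1 + S))) := by
    refine Tendsto.add ?_ ?_
    · simpa using ((hasSum_nat_add_iff' 1).2 hS).tendsto_sum_nat
    · have h := hS.zero_add (f := fun i => X ^ i.choose 2)
      simp only [Nat.choose_zero_succ, pow_zero] at h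
      exact h.tendsto_sum_nat.comp (tendsto_add_atTop_nat 1)
  have h := tendsto_nhds_unique hprod ((hsum.add (tendsto_zero_of_X_pow_dvd
    X_pow_dvd_prod_mul_qPochhammer_sub_sum)).congr fun N => add_sub_cancel _ _)
  apply nsmul_right_injective two_ne_zero
  dsimp only
  linear_combination -h

end

open PowerSeries.WithPiTopology in
theorem tsum_X_pow_triangle_eq_mul_inv (K : Type*) [Field K] [CharZero K] [TopologicalSpace K]
    [IsTopologicalRing K] [T2Space K] :
    ∑' m : ℕ, (X : K⟦X⟧) ^ (m * (m + 1) / 2) =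
      (∏' n : ℕ, (1 - (X : K⟦X⟧) ^ (2 * (n + 1)))) *
        (∏' n : ℕ, (1 - (X : K⟦X⟧) ^ (2 * n + 1)))⁻¹ := by
  have hS := tsum_X_pow_triangle_eq_sq_mul K
  set A := ∏' n : ℕ, (1 + (X : K⟦X⟧) ^ (n + 1))
  set B := ∏' n : ℕ, (1 - (X : K⟦X⟧) ^ (n + 1))
  set O := ∏' n : ℕ, (1 - (X : K⟦X⟧) ^ (2 * n + 1))
  have hA : HasProd (fun n => 1 + (X : K⟦X⟧) ^ (n + 1)) A :=
    (multipliable_one_add_X_pow_comp (tendsto_add_atTop_nat 1)).hasProd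
  have hB : HasProd (fun n => 1 - (X : K⟦X⟧) ^ (n + 1)) B :=
    (multipliable_one_sub_X_pow K).hasProd
  have hO : HasProd (fun n => 1 - (X : K⟦X⟧) ^ (2 * n + 1)) O :=
    (multipliable_one_sub_X_pow_comp
      (tendsto_atTop_mono (fun n => show n ≤ 2 * n + 1 by omega) tendsto_id)).hasProd
  have hE : HasProd (fun n => 1 - (X : K⟦X⟧) ^ (2 * (n + 1))) (A * B) := by
    convert hA.mul hB using 1
    funext n
    rw [mul_comm 2, pow_mul]
    ring
  have hBOE : B = O * (A * B) := by
    refine hB.unique (hO.even_mul_odd (f := fun n => 1 - X ^ (n + 1)) ?_)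
    convert hE using 3
    ring
  have hO₀ : constantCoeff O ≠ 0 := by
    rw [hO.multipliable.map_tprod _ (continuous_constantCoeff K)]
    simp
  rw [hE.tprod_eq, eq_mul_inv_iff_mul_eq hO₀, hS]
  linear_combination -A * hBOE

/-- Gauss's identity: (−q;q)_∞ · Σ q^{T_m} = (−q;q)_∞^3 · (q;q)_∞, i.e.
Σ_{m≥0} q^{m(m+1)/2} = (q²;q²)_∞ / (q;q²)_∞. -/
theorem stmt1 :
    ((∏' n : ℕ, (1 + (X : PowerSeries ℤ) ^ (n + 1))) *
        ∑' m : ℕ, (X : PowerSeries ℤ) ^ (m * (m + 1) / 2))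
      = (∏' n : ℕ, (1 + (X : PowerSeries ℤ) ^ (n + 1))) ^ 3 *
          ∏' n : ℕ, (1 - (X : PowerSeries ℤ) ^ (n + 1)) ∧
    (∑' m : ℕ, (X : PowerSeries ℚ) ^ (m * (m + 1) / 2))
      = (∏' n : ℕ, (1 - (X : PowerSeries ℚ) ^ (2 * (n + 1)))) *
          (∏' n : ℕ, (1 - (X : PowerSeries ℚ) ^ (2 * n + 1)))⁻¹ := by
  refine ⟨?_, tsum_X_pow_triangle_eq_mul_inv ℚ⟩
  -- restated so that the sums and products carry the topology of the statement
  have h : ∑' m : ℕ, (X : PowerSeries ℤ) ^ (m * (m + 1) / 2) =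
      (∏' n : ℕ, (1 + (X : PowerSeries ℤ) ^ (n + 1))) ^ 2 *
        ∏' n : ℕ, (1 - (X : PowerSeries ℤ) ^ (n + 1)) :=
    tsum_X_pow_triangle_eq_sq_mul ℤ
  rw [h]
  ring
end

section
/- For every positive integer n, σmex̄(n) is odd if and only if n is a triangular number, i.e., n = j(j+1)/2 for some positive integer j. In particular, σmex̄(n) is even for all n not of this form. -/
/-!
Count pairs `(π, m)` with `m < mex π`, i.e. with `1, …, m` all among the non-overlined parts of
`π`. Deleting one copy of each of `1, …, m` is a bijection onto the overpartitions of
`n - m(m+1)/2`, so `σmex̄(n) = ∑ p̄(n - m(m+1)/2)` over the `m` with `m(m+1)/2 ≤ n`.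
Toggling the overline on one copy of the largest part is a fixed-point-free involution on
the overpartitions of any `k > 0`, so `p̄(k)` is even, while `p̄(0) = 1`. Hence `σmex̄(n)` is
odd exactly when `n = m(m+1)/2` for some `m`, which is then unique.
-/

/-- An overpartition of `n`: a multiset of non-overlined positive parts together with a
finite set of overlined positive parts (at most one overlined copy per part size). -/
structure Overpartition (n : ℕ) where
  parts : Multiset ℕ              -- non-overlined parts
  overlined : Finset ℕ            -- overlined parts (distinct sizes)
  parts_pos : ∀ i ∈ parts, 0 < i
  overlined_pos : ∀ i ∈ overlined, 0 < i
  sum_eq : parts.sum + ∑ i ∈ overlined, i = n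

/-- Minimal excludant of an overpartition: the least positive integer not among
the non-overlined parts. -/
noncomputable def Overpartition.mex {n : ℕ} (π : Overpartition n) : ℕ :=
  sInf {m : ℕ | 0 < m ∧ m ∉ π.parts}

/-- Least `r`-gap: the least positive integer occurring fewer than `r` times among
the non-overlined parts. -/
noncomputable def Overpartition.rgap {n : ℕ} (r : ℕ) (π : Overpartition n) : ℕ :=
  sInf {m : ℕ | 0 < m ∧ π.parts.count m < r}

/-- `σmex̄(n)`: sum of minimal excludants over all overpartitions of `n`. -/
noncomputable def sigmaMex (n : ℕ) : ℕ := ∑ᶠ π : Overpartition n, π.mex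

/-- `σ_r mex̄(n)`: sum of least `r`-gaps over all overpartitions of `n`. -/
noncomputable def sigmaRMex (r n : ℕ) : ℕ := ∑ᶠ π : Overpartition n, π.rgap r

/-- `p̄(n)`: the number of overpartitions of `n`. -/
noncomputable def pbar (n : ℕ) : ℕ := Nat.card (Overpartition n)

open Finset

theorem Function.Involutive.even_card_of_forall_ne {α : Type*} [Fintype α] {f : α → α}
    (hf : Function.Involutive f) (hne : ∀ a, f a ≠ a) : Even (Fintype.card α) := by
  rw [← ZMod.natCast_eq_zero_iff_even, Fintype.card, card_eq_sum_ones, Nat.cast_sum,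
    Nat.cast_one]
  exact sum_ninvolution f (fun _ => by decide) (fun a _ => hne a) (fun _ => mem_univ _) hf

theorem Finset.odd_card_filter_eq_iff {α β : Type*} [DecidableEq β] {f : α → β}
    (hf : Function.Injective f) (s : Finset α) (b : β) :
    Odd #{a ∈ s | f a = b} ↔ ∃ a ∈ s, f a = b := by
  have hle : #{a ∈ s | f a = b} ≤ 1 :=
    card_le_one.2 fun a ha a' ha' => hf ((mem_filter.1 ha).2.trans (mem_filter.1 ha').2.symm)
  rw [← filter_nonempty_iff, ← card_pos, Nat.odd_iff]
  omega

theorem sum_Icc_one_id_mul_two (m : ℕ) : (∑ i ∈ Icc 1 m, i) * 2 = m * (m + 1) := by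
  induction m with
  | zero => rfl
  | succ m ih => rw [sum_Icc_succ_top (by omega), add_mul, ih]; ring

theorem strictMono_sum_Icc_one_id : StrictMono fun m => ∑ i ∈ Icc 1 m, i :=
  strictMono_nat_of_lt_succ fun m => by rw [sum_Icc_succ_top (by omega)]; omega

def Nat.Partition.ofSumLE {n : ℕ} (s : Multiset ℕ) (hs : ∀ i ∈ s, 0 < i) (h : s.sum ≤ n) :
    Σ k : Fin (n + 1), Nat.Partition k :=
  ⟨⟨s.sum, Nat.lt_succ_of_le h⟩, ⟨s, hs _, rfl⟩⟩

namespace Overpartition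

variable {n : ℕ}

@[ext]
theorem ext {π ρ : Overpartition n} (hparts : π.parts = ρ.parts)
    (hoverlined : π.overlined = ρ.overlined) : π = ρ := by
  cases π; cases ρ; simp_all

theorem parts_sum_le (π : Overpartition n) : π.parts.sum ≤ n := by
  have := π.sum_eq; omega

theorem overlined_sum_le (π : Overpartition n) : π.overlined.val.sum ≤ n := by
  have := π.sum_eq
  rw [Finset.sum_eq_multiset_sum, Multiset.map_id'] at this
  omega

theorem sum_le_of_le_parts (π : Overpartition n) {s : Multiset ℕ} (h : s ≤ π.parts) :
    s.sum ≤ n := by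
  obtain ⟨t, ht⟩ := Multiset.le_iff_exists_add.1 h
  have := π.parts_sum_le
  rw [ht, Multiset.sum_add] at this
  omega

theorem le_of_mem_parts (π : Overpartition n) {k : ℕ} (hk : k ∈ π.parts) : k ≤ n :=
  (Multiset.le_sum_of_mem hk).trans π.parts_sum_le

instance : Finite (Overpartition n) :=
  Finite.of_injective
    (fun π => (Nat.Partition.ofSumLE π.parts π.parts_pos π.parts_sum_le,
      Nat.Partition.ofSumLE π.overlined.val π.overlined_pos π.overlined_sum_le))
    fun _ _ h => ext (congrArg (·.1.2.parts) h) (val_injective (congrArg (·.2.2.parts) h))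

noncomputable instance : Fintype (Overpartition n) := Fintype.ofFinite _

theorem lt_mex_iff (π : Overpartition n) {m : ℕ} :
    m < π.mex ↔ (Icc 1 m).val ≤ π.parts := by
  rw [Multiset.le_iff_subset (Icc 1 m).nodup]
  constructor
  · intro h k hk
    rw [mem_val, mem_Icc] at hk
    by_contra hkp
    exact absurd (Nat.sInf_le (s := {m | 0 < m ∧ m ∉ π.parts}) ⟨hk.1, hkp⟩)
      (show ¬π.mex ≤ k by omega)
  · intro h
    by_contra! hle
    have hmem : π.mex ∈ {m : ℕ | 0 < m ∧ m ∉ π.parts} :=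
      Nat.sInf_mem ⟨n + 1, n.succ_pos, fun hm => by have := π.le_of_mem_parts hm; omega⟩
    exact hmem.2 (h (mem_Icc.2 ⟨hmem.1, hle⟩))

theorem mex_le (π : Overpartition n) : π.mex ≤ n + 1 :=
  Nat.sInf_le ⟨n.succ_pos, fun h => by have := π.le_of_mem_parts h; omega⟩

def partSizes (π : Overpartition n) : Finset ℕ := π.parts.toFinset ∪ π.overlined

noncomputable def largestPart (π : Overpartition n) : ℕ := π.partSizes.sup id

theorem largestPart_mem (hn : 0 < n) (π : Overpartition n) : π.largestPart ∈ π.partSizes := by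
  have hne : π.partSizes.Nonempty := by
    by_contra h
    rw [not_nonempty_iff_eq_empty, partSizes, union_eq_empty, Multiset.toFinset_eq_empty] at h
    have := π.sum_eq
    simp only [h, Multiset.sum_zero, sum_empty] at this
    omega
  obtain ⟨k, hk, hsup⟩ := exists_mem_eq_sup _ hne id
  rwa [largestPart, hsup]

theorem largestPart_pos (hn : 0 < n) (π : Overpartition n) : 0 < π.largestPart := by
  rcases mem_union.1 (π.largestPart_mem hn) with h | h
  · exact π.parts_pos _ (Multiset.mem_toFinset.1 h)
  · exact π.overlined_pos _ h

theorem largestPart_mem_parts (hn : 0 < n) (π : Overpartition n)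
    (h : π.largestPart ∉ π.overlined) : π.largestPart ∈ π.parts := by
  simpa [partSizes, h] using π.largestPart_mem hn

noncomputable def toggleLargest (hn : 0 < n) (π : Overpartition n) : Overpartition n :=
  if h : π.largestPart ∈ π.overlined then
    { parts := π.largestPart ::ₘ π.parts
      overlined := π.overlined.erase π.largestPart
      parts_pos := by
        simpa using ⟨π.largestPart_pos hn, π.parts_pos⟩
      overlined_pos := fun i hi => π.overlined_pos i (mem_of_mem_erase hi)
      sum_eq := by
        have := sum_erase_add π.overlined (fun i => i) h
        have := π.sum_eq
        rw [Multiset.sum_cons]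
        omega }
  else
    { parts := π.parts.erase π.largestPart
      overlined := insert π.largestPart π.overlined
      parts_pos := fun i hi => π.parts_pos i (Multiset.mem_of_mem_erase hi)
      overlined_pos := by
        simpa using ⟨π.largestPart_pos hn, π.overlined_pos⟩
      sum_eq := by
        have := congrArg Multiset.sum (Multiset.cons_erase (π.largestPart_mem_parts hn h))
        have := π.sum_eq
        rw [Multiset.sum_cons] at *
        rw [sum_insert h]
        omega }

section toggle

variable (hn : 0 < n)

theorem parts_toggleLargest_of_mem {π : Overpartition n} (h : π.largestPart ∈ π.overlined) :
    (π.toggleLargest hn).parts = π.largestPart ::ₘ π.parts := by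
  rw [toggleLargest, dif_pos h]

theorem overlined_toggleLargest_of_mem {π : Overpartition n}
    (h : π.largestPart ∈ π.overlined) :
    (π.toggleLargest hn).overlined = π.overlined.erase π.largestPart := by
  rw [toggleLargest, dif_pos h]

theorem parts_toggleLargest_of_notMem {π : Overpartition n} (h : π.largestPart ∉ π.overlined) :
    (π.toggleLargest hn).parts = π.parts.erase π.largestPart := by
  rw [toggleLargest, dif_neg h]

theorem overlined_toggleLargest_of_notMem {π : Overpartition n}
    (h : π.largestPart ∉ π.overlined) :
    (π.toggleLargest hn).overlined = insert π.largestPart π.overlined := by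
  rw [toggleLargest, dif_neg h]

theorem partSizes_toggleLargest (π : Overpartition n) :
    (π.toggleLargest hn).partSizes = π.partSizes := by
  have hs := π.largestPart_mem_parts hn
  ext k
  by_cases hk : k = π.largestPart
  · subst hk
    by_cases h : π.largestPart ∈ π.overlined <;> simp [toggleLargest, partSizes, h, hs]
  · by_cases h : π.largestPart ∈ π.overlined <;>
      simp [toggleLargest, partSizes, h, hk, Multiset.mem_erase_of_ne hk]

theorem largestPart_toggleLargest (π : Overpartition n) :
    (π.toggleLargest hn).largestPart = π.largestPart := by
  rw [largestPart, partSizes_toggleLargest, largestPart]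

theorem toggleLargest_involutive : Function.Involutive (toggleLargest hn) := by
  intro π
  set ρ := π.toggleLargest hn
  have hs : ρ.largestPart = π.largestPart := largestPart_toggleLargest hn π
  by_cases h : π.largestPart ∈ π.overlined
  · have h' : ρ.largestPart ∉ ρ.overlined := by
      rw [hs, overlined_toggleLargest_of_mem hn h]
      exact notMem_erase _ _
    ext1
    · rw [parts_toggleLargest_of_notMem hn h', hs, parts_toggleLargest_of_mem hn h,
        Multiset.erase_cons_head]
    · rw [overlined_toggleLargest_of_notMem hn h', hs, overlined_toggleLargest_of_mem hn h,
        insert_erase h]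
  · have h' : ρ.largestPart ∈ ρ.overlined := by
      rw [hs, overlined_toggleLargest_of_notMem hn h]
      exact mem_insert_self _ _
    ext1
    · rw [parts_toggleLargest_of_mem hn h', hs, parts_toggleLargest_of_notMem hn h,
        Multiset.cons_erase (π.largestPart_mem_parts hn h)]
    · rw [overlined_toggleLargest_of_mem hn h', hs, overlined_toggleLargest_of_notMem hn h,
        erase_insert h]

theorem toggleLargest_ne (π : Overpartition n) : π.toggleLargest hn ≠ π := by
  intro heq
  have hcard := congrArg (Multiset.card ·.parts) heq
  by_cases h : π.largestPart ∈ π.overlined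
  · simp only [parts_toggleLargest_of_mem hn h, Multiset.card_cons] at hcard
    omega
  · have hmem := π.largestPart_mem_parts hn h
    simp only [parts_toggleLargest_of_notMem hn h, Multiset.card_erase_of_mem hmem] at hcard
    have := Multiset.card_pos_iff_exists_mem.2 ⟨_, hmem⟩
    rw [Nat.pred_eq_sub_one] at hcard
    omega

end toggle

instance : Unique (Overpartition 0) where
  default := ⟨0, ∅, by simp, by simp, rfl⟩
  uniq π := by
    have h := π.sum_eq
    rw [Nat.add_eq_zero_iff, Multiset.sum_eq_zero_iff, sum_eq_zero_iff] at h
    refine ext (Multiset.eq_zero_of_forall_notMem fun i hi => ?_)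
      (eq_empty_of_forall_notMem fun i hi => ?_)
    · exact (π.parts_pos i hi).ne' (h.1 i hi)
    · exact (π.overlined_pos i hi).ne' (h.2 i hi)

def removePartsEquiv (s : Multiset ℕ) (hs : ∀ i ∈ s, 0 < i) (h : s.sum ≤ n) :
    {π : Overpartition n // s ≤ π.parts} ≃ Overpartition (n - s.sum) where
  toFun π :=
    { parts := π.1.parts - s
      overlined := π.1.overlined
      parts_pos := fun i hi => π.1.parts_pos i (Multiset.mem_of_le tsub_le_self hi)
      overlined_pos := π.1.overlined_pos
      sum_eq := by
        have := congrArg Multiset.sum (tsub_add_cancel_of_le π.2)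
        have := π.1.sum_eq
        rw [Multiset.sum_add] at *
        omega }
  invFun π :=
    ⟨{ parts := π.parts + s
       overlined := π.overlined
       parts_pos := by simpa [or_imp, forall_and] using ⟨π.parts_pos, hs⟩
       overlined_pos := π.overlined_pos
       sum_eq := by
         have := π.sum_eq
         rw [Multiset.sum_add]
         omega }, Multiset.le_add_left _ _⟩
  left_inv π := Subtype.ext (ext (tsub_add_cancel_of_le π.2) rfl)
  right_inv π := ext (add_tsub_cancel_right _ _) rfl

end Overpartition

theorem even_pbar {n : ℕ} (hn : 0 < n) : Even (pbar n) := by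
  rw [pbar, Nat.card_eq_fintype_card]
  exact (Overpartition.toggleLargest_involutive hn).even_card_of_forall_ne
    (Overpartition.toggleLargest_ne hn)

theorem pbar_zero : pbar 0 = 1 :=
  Nat.card_unique

theorem odd_pbar_iff {n : ℕ} : Odd (pbar n) ↔ n = 0 := by
  rcases Nat.eq_zero_or_pos n with rfl | hn
  · simp [pbar_zero]
  · simp [Nat.not_odd_iff_even.2 (even_pbar hn), hn.ne']

theorem card_subtype_le_parts (n : ℕ) {s : Multiset ℕ} (hs : ∀ i ∈ s, 0 < i) :
    Nat.card {π : Overpartition n // s ≤ π.parts} =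
      if s.sum ≤ n then pbar (n - s.sum) else 0 := by
  split_ifs with h
  · exact Nat.card_congr (Overpartition.removePartsEquiv s hs h)
  · rw [Nat.card_eq_zero]
    exact Or.inl ⟨fun π => h (π.1.sum_le_of_le_parts π.2)⟩

theorem odd_card_lt_mex_iff (n m : ℕ) :
    Odd (Nat.card {π : Overpartition n // m < π.mex}) ↔ ∑ i ∈ Icc 1 m, i = n := by
  rw [Nat.card_congr (Equiv.subtypeEquivRight fun π => π.lt_mex_iff),
    card_subtype_le_parts n fun i hi => (mem_Icc.1 hi).1, ← Multiset.map_id' (Icc 1 m).val,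
    ← sum_eq_multiset_sum]
  split_ifs with h
  · rw [odd_pbar_iff]
    omega
  · simp only [Nat.not_odd_zero, false_iff]
    omega

theorem sigmaMex_eq_sum_card (n : ℕ) :
    sigmaMex n = ∑ m ∈ range (n + 1), Nat.card {π : Overpartition n // m < π.mex} := by
  classical
  have hmex (π : Overpartition n) : π.mex = #{m ∈ range (n + 1) | m < π.mex} := by
    rw [show {m ∈ range (n + 1) | m < π.mex} = range π.mex by
      ext m; simp only [mem_filter, mem_range]; have := π.mex_le; omega, card_range]
  rw [sigmaMex, finsum_eq_sum_of_fintype, sum_congr rfl fun π _ => hmex π]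
  simp only [card_filter, Nat.card_eq_fintype_card, Fintype.card_subtype]
  exact sum_comm

theorem exists_sum_Icc_one_id_eq_iff {n : ℕ} (hn : 0 < n) :
    (∃ m ∈ range (n + 1), ∑ i ∈ Icc 1 m, i = n) ↔ ∃ j : ℕ, 0 < j ∧ n = j * (j + 1) / 2 := by
  constructor
  · rintro ⟨j, -, hj⟩
    have := sum_Icc_one_id_mul_two j
    refine ⟨j, Nat.pos_of_ne_zero ?_, by omega⟩
    rintro rfl
    rw [Icc_eq_empty (by omega), sum_empty] at hj
    omega
  · rintro ⟨j, hj, rfl⟩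
    have := sum_Icc_one_id_mul_two j
    have : j * 2 ≤ j * (j + 1) := Nat.mul_le_mul_left j (by omega)
    exact ⟨j, mem_range.2 (by omega), by omega⟩

/-- For positive `n`, σmex̄(n) is odd iff `n` is a (positive) triangular number. -/
theorem stmt4 (n : ℕ) (hn : 0 < n) :
    Odd (sigmaMex n) ↔ ∃ j : ℕ, 0 < j ∧ n = j * (j + 1) / 2 := by
  rw [sigmaMex_eq_sum_card, odd_sum_iff_odd_card_odd]
  simp_rw [odd_card_lt_mex_iff]
  rw [odd_card_filter_eq_iff strictMono_sum_Icc_one_id.injective]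
  exact exists_sum_Icc_one_id_eq_iff hn
end

section
/- For each r ≥ 1 and n ≥ 0, the number of overpartitions π of n with least r-gap strictly greater than k equals p̄(n − r·T_k), where T_k = k(k+1)/2 (and p̄(m) = 0 for m < 0). -/
/-!
Removing the staircase `1^r 2^r … k^r` from the non-overlined parts is a bijection from the
overpartitions of `n` whose least `r`-gap exceeds `k` (i.e. each of `1, …, k` occurs at least
`r` times without overline) onto all overpartitions of `n - r T_k`; its inverse adds the
staircase back. When `r T_k > n` no overpartition of `n` contains the staircase.
-/

open Finset

def staircase (r k : ℕ) : Multiset ℕ := r • (Icc 1 k).val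

theorem count_staircase (r k a : ℕ) :
    (staircase r k).count a = if a ∈ Icc 1 k then r else 0 := by
  rw [staircase, Multiset.count_nsmul, Multiset.count_eq_of_nodup (Icc 1 k).nodup]
  simp only [Finset.mem_val, mul_ite, mul_one, mul_zero]

theorem pos_of_mem_staircase {r k a : ℕ} (h : a ∈ staircase r k) : 0 < a := by
  have := (Multiset.mem_nsmul.mp h).2
  simp only [Finset.mem_val, Finset.mem_Icc] at this
  omega

theorem Finset.sum_Icc_id_mul_two (k : ℕ) : (∑ i ∈ Icc 1 k, i) * 2 = k * (k + 1) := by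
  induction k with
  | zero => simp
  | succ k ih => rw [sum_Icc_succ_top (by omega), add_mul, ih]; ring

theorem sum_staircase (r k : ℕ) : (staircase r k).sum = r * (k * (k + 1) / 2) := by
  rw [staircase, Multiset.sum_nsmul, smul_eq_mul, Finset.sum_val]
  change r * ∑ i ∈ Icc 1 k, i = _
  have := sum_Icc_id_mul_two k
  congr 1
  omega

theorem staircase_le_iff {r k : ℕ} {t : Multiset ℕ} :
    staircase r k ≤ t ↔ ∀ m, 0 < m → m ≤ k → r ≤ t.count m := by
  simp only [Multiset.le_iff_count, count_staircase, Finset.mem_Icc]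
  refine ⟨fun h m hm hmk => by simpa [Nat.one_le_iff_ne_zero, hm.ne', hmk] using h m, ?_⟩
  intro h a
  split_ifs with ha
  · exact h a ha.1 ha.2
  · exact Nat.zero_le _

theorem Multiset.sum_tsub_add_sum {α : Type*} [DecidableEq α] [AddCommMonoid α]
    {s t : Multiset α} (h : s ≤ t) :
    (t - s).sum + s.sum = t.sum := by
  rw [← Multiset.sum_add, tsub_add_cancel_of_le h]

namespace Overpartition

variable {n : ℕ}

theorem ext_of_parts {π σ : Overpartition n} (hp : π.parts = σ.parts)
    (ho : π.overlined = σ.overlined) : π = σ := by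
  cases π; cases σ; simp_all

theorem notMem_parts_of_lt (π : Overpartition n) {m : ℕ} (hm : n < m) : m ∉ π.parts :=
  fun h => by simpa using (π.sum_le_of_le_parts (Multiset.singleton_le.mpr h)).trans_lt hm

theorem lt_rgap_iff {r : ℕ} (hr : 0 < r) (π : Overpartition n) (k : ℕ) :
    k < π.rgap r ↔ ∀ m, 0 < m → m ≤ k → r ≤ π.parts.count m := by
  have hne : {m : ℕ | 0 < m ∧ π.parts.count m < r}.Nonempty :=
    ⟨n + 1, n.succ_pos, by rwa [Multiset.count_eq_zero.mpr (π.notMem_parts_of_lt n.lt_succ_self)]⟩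
  rw [rgap, Nat.lt_iff_add_one_le, le_csInf_iff' hne]
  refine ⟨fun h m hm hmk => ?_, fun h m ⟨hm, hcount⟩ => ?_⟩
  · by_contra! hcount
    have := h ⟨hm, hcount⟩
    omega
  · by_contra! hmk
    have := h m hm (by omega)
    omega

theorem lt_rgap_iff_staircase_le {r : ℕ} (hr : 0 < r) (π : Overpartition n) (k : ℕ) :
    k < π.rgap r ↔ staircase r k ≤ π.parts := by
  rw [π.lt_rgap_iff hr, staircase_le_iff]

def removeParts (s : Multiset ℕ) (hs : ∀ i ∈ s, 0 < i) (m : ℕ) :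
    {π : Overpartition (m + s.sum) // s ≤ π.parts} ≃ Overpartition m where
  toFun π :=
    { parts := π.1.parts - s
      overlined := π.1.overlined
      parts_pos := fun i hi => π.1.parts_pos i (Multiset.mem_of_le (Multiset.sub_le_self _ _) hi)
      overlined_pos := π.1.overlined_pos
      sum_eq := by
        have := Multiset.sum_tsub_add_sum π.2
        have := π.1.sum_eq
        omega }
  invFun σ :=
    ⟨{ parts := σ.parts + s
       overlined := σ.overlined
       parts_pos := fun i hi => (Multiset.mem_add.mp hi).elim (σ.parts_pos i) (hs i)
       overlined_pos := σ.overlined_pos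
       sum_eq := by rw [Multiset.sum_add]; have := σ.sum_eq; omega },
     Multiset.le_add_left _ _⟩
  left_inv π := Subtype.ext (ext_of_parts (tsub_add_cancel_of_le π.2) rfl)
  right_inv σ := ext_of_parts (add_tsub_cancel_right _ _) rfl

end Overpartition

/-- The number of overpartitions of n with least r-gap > k equals p̄(n − r·T_k)
(and 0 when r·T_k > n). -/
theorem stmt18 (r n k : ℕ) (hr : 1 ≤ r) :
    Nat.card {π : Overpartition n // k < π.rgap r}
      = if r * (k * (k + 1) / 2) ≤ n then pbar (n - r * (k * (k + 1) / 2)) else 0 := by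
  simp_rw [Overpartition.lt_rgap_iff_staircase_le hr, ← sum_staircase]
  split_ifs with h
  · obtain ⟨m, rfl⟩ := Nat.exists_eq_add_of_le' h
    rw [Nat.add_sub_cancel, pbar]
    exact Nat.card_congr (Overpartition.removeParts _ (fun _ => pos_of_mem_staircase) m)
  · rw [Nat.card_eq_zero]
    exact .inl ⟨fun π => h (π.1.sum_le_of_le_parts π.2)⟩
end
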